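/- arXiv:1812.04425 — 3 statements merged into one kernel-verified Lean document; each statement's English description precedes it below -/
import Mathlib

section
/- Let R = ⨁_{d≥0} R_d be a nonnegatively graded commutative ring such that R_0 is a local ring with maximal ideal 𝔪_0, and let 𝔪 ⊆ R be the ideal generated by 𝔪_0 together with all homogeneous elements of positive degree. Let M = ⨁_{d≥0} M_d and N = ⨁_{d≥0} N_d be nonnegatively graded R-modules such that each M_d and each N_d is a finitely generated R_0-module, and let f: M → N be a morphism of graded R-modules (R-linear with f(M_d) ⊆ N_d for all d). If the induced map M/𝔪M → N/𝔪N is surjective, then f is surjective. -/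
/-! Induct on the degree `d` to show `N_d ⊆ f(M)`. The degree-`d` component of an element of
`𝔪N` lies in `𝔪₀N_d` plus positive-degree multiples of components of degree `< d`, and the latter
are in `f(M)` by induction. As `f` commutes with the projection to degree `d`, surjectivity
modulo `𝔪N` gives `N_d ⊆ (f(M) ∩ N_d) + 𝔪₀N_d`, and Nakayama's lemma over the local ring `R_0`
for the finitely generated `R_0`-module `N_d` concludes. -/

open DirectSum

namespace DirectSum

variable {ι M N σ τ : Type*} [DecidableEq ι] [AddCommMonoid M] [AddCommMonoid N]
  [SetLike σ M] [AddSubmonoidClass σ M] [SetLike τ N] [AddSubmonoidClass τ N]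
  (ℳ : ι → σ) (𝒩 : ι → τ) [Decomposition ℳ] [Decomposition 𝒩]

theorem coe_decompose_of_mem {x : M} {i : ι} (hx : x ∈ ℳ i) (j : ι) :
    (decompose ℳ x j : M) = if i = j then x else 0 := by
  split_ifs with h
  · exact h ▸ decompose_of_mem_same ℳ hx
  · exact decompose_of_mem_ne ℳ hx h

theorem coe_decompose_map_of_map_mem {F : Type*} [FunLike F M N] [AddMonoidHomClass F M N]
    (f : F) (hf : ∀ i, ∀ m ∈ ℳ i, f m ∈ 𝒩 i) (m : M) (i : ι) :
    (decompose 𝒩 (f m) i : N) = f (decompose ℳ m i) := by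
  induction m using Decomposition.inductionOn ℳ with
  | zero => simp
  | homogeneous m =>
    rw [coe_decompose_of_mem 𝒩 (hf _ _ m.2), coe_decompose_of_mem ℳ m.2]
    split_ifs <;> simp
  | add m m' hm hm' => simp [hm, hm']

end DirectSum

section GradedModule

variable {R N : Type*} [CommRing R] (𝒜 : ℕ → AddSubgroup R) [AddCommGroup N] [Module R N]
  (𝒩 : ℕ → AddSubgroup N) [SetLike.GradedSMul 𝒜 𝒩]

theorem coe_decompose_smul_of_left_mem [Decomposition 𝒩] {r : R} {i : ℕ} (hr : r ∈ 𝒜 i)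
    (y : N) (d : ℕ) :
    (decompose 𝒩 (r • y) d : N) = if i ≤ d then r • (decompose 𝒩 y (d - i) : N) else 0 := by
  induction y using Decomposition.inductionOn 𝒩 with
  | zero => simp
  | @homogeneous j y =>
    have hry : r • (y : N) ∈ 𝒩 (i + j) := SetLike.GradedSMul.smul_mem hr y.2
    rw [coe_decompose_of_mem 𝒩 hry, coe_decompose_of_mem 𝒩 y.2]
    split_ifs <;> first | rfl | omega | simp
  | add y y' hy hy' =>
    rw [smul_add, decompose_add, DirectSum.add_apply, AddMemClass.coe_add, hy, hy']
    split_ifs <;> simp [smul_add]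

variable [SetLike.GradedMonoid 𝒜] [Module (𝒜 0) N] [IsScalarTower (𝒜 0) R N]

theorem coe_gradeZero_smul (a : 𝒜 0) (n : N) : (a : R) • n = a • n :=
  algebraMap_smul R a n

def gradeSubmodule (d : ℕ) : Submodule (𝒜 0) N where
  carrier := 𝒩 d
  add_mem' := add_mem
  zero_mem' := zero_mem _
  smul_mem' a n hn := by
    rw [← coe_gradeZero_smul]
    simpa using SetLike.GradedSMul.smul_mem a.2 hn

theorem gradeSubmodule_fg {d : ℕ} (h : ∃ s : Finset N, (s : Set N) ⊆ 𝒩 d ∧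
      ∀ n ∈ 𝒩 d, ∃ c : N → R, (∀ x, c x ∈ 𝒜 0) ∧ n = ∑ x ∈ s, c x • x) :
    (gradeSubmodule 𝒜 𝒩 d).FG := by
  obtain ⟨s, hs, hgen⟩ := h
  refine ⟨s, le_antisymm (Submodule.span_le.2 hs) fun n hn => ?_⟩
  obtain ⟨c, hc, rfl⟩ := hgen n hn
  refine Submodule.sum_mem _ fun x hx => ?_
  rw [show c x • x = (⟨c x, hc x⟩ : 𝒜 0) • x from coe_gradeZero_smul 𝒜 ⟨c x, hc x⟩ x]
  exact Submodule.smul_mem _ _ (Submodule.subset_span hx)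

def idealSupIrrelevant (I : Ideal (𝒜 0)) : Ideal R :=
  Ideal.span (Subtype.val '' (I : Set (𝒜 0)) ∪ {x | ∃ i, 0 < i ∧ x ∈ 𝒜 i})

variable [Decomposition 𝒩]

theorem coe_decompose_mem_of_mem_smul_top {I : Ideal (𝒜 0)} {Q : Submodule R N} {d : ℕ}
    (hQ : ∀ j < d, ∀ n ∈ 𝒩 j, n ∈ Q) {z : N}
    (hz : z ∈ idealSupIrrelevant 𝒜 I • (⊤ : Submodule R N)) :
    (decompose 𝒩 z d : N) ∈ Q.restrictScalars (𝒜 0) ⊔ I • gradeSubmodule 𝒜 𝒩 d := by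
  set T := Q.restrictScalars (𝒜 0) ⊔ I • gradeSubmodule 𝒜 𝒩 d
  have hgen : ∀ r ∈ Subtype.val '' (I : Set (𝒜 0)) ∪ {x | ∃ i, 0 < i ∧ x ∈ 𝒜 i},
      ∀ y : N, (decompose 𝒩 (r • y) d : N) ∈ T := by
    rintro r (⟨a, ha, rfl⟩ | ⟨i, hi, hr⟩) y
    · rw [coe_decompose_smul_of_left_mem 𝒜 𝒩 a.2, if_pos d.zero_le, Nat.sub_zero,
        coe_gradeZero_smul]
      exact Submodule.mem_sup_right (Submodule.smul_mem_smul ha (decompose 𝒩 y d).2)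
    · rw [coe_decompose_smul_of_left_mem 𝒜 𝒩 hr]
      split_ifs with hid
      · exact Submodule.mem_sup_left (Q.smul_mem r (hQ (d - i) (by omega) _ (decompose 𝒩 y _).2))
      · exact zero_mem T
  have hspan : ∀ r ∈ idealSupIrrelevant 𝒜 I, ∀ y : N, (decompose 𝒩 (r • y) d : N) ∈ T := by
    intro r hr
    induction hr using Submodule.span_induction with
    | mem r hr => exact hgen r hr
    | zero => simp
    | add r r' _ _ h h' => intro y; simpa [add_smul] using add_mem (h y) (h' y)
    | smul a r _ h => intro y; rw [smul_eq_mul, mul_comm, mul_smul]; exact h _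
  refine Submodule.smul_induction_on hz (fun r hr y _ => hspan r hr y) fun z z' h h' => ?_
  simpa using add_mem h h'

theorem mem_range_of_mem_grade {M : Type*} [AddCommGroup M] [Module R M]
    (ℳ : ℕ → AddSubgroup M) [Decomposition ℳ] (f : M →ₗ[R] N) (hf : ∀ d, ∀ m ∈ ℳ d, f m ∈ 𝒩 d)
    {I : Ideal (𝒜 0)} (hI : I ≤ Ideal.jacobson ⊥)
    (hsurj : ∀ n : N, ∃ m : M, n - f m ∈ idealSupIrrelevant 𝒜 I • (⊤ : Submodule R N))
    {d : ℕ} (hfg : (gradeSubmodule 𝒜 𝒩 d).FG) (hlt : ∀ j < d, ∀ n ∈ 𝒩 j, n ∈ LinearMap.range f) :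
    ∀ n ∈ 𝒩 d, n ∈ LinearMap.range f := by
  suffices gradeSubmodule 𝒜 𝒩 d ≤ (LinearMap.range f).restrictScalars (𝒜 0) from
    fun n hn => this hn
  refine Submodule.le_of_le_smul_of_le_jacobson_bot hfg hI fun n hn => ?_
  obtain ⟨m, hm⟩ := hsurj n
  have hsplit : n = decompose 𝒩 (f m) d + decompose 𝒩 (n - f m) d := by
    rw [← AddMemClass.coe_add, ← DirectSum.add_apply, ← decompose_add, add_sub_cancel,
      decompose_of_mem_same 𝒩 hn]
  rw [hsplit, coe_decompose_map_of_map_mem ℳ 𝒩 f hf]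
  exact add_mem (Submodule.mem_sup_left ⟨_, rfl⟩) (coe_decompose_mem_of_mem_smul_top 𝒜 𝒩 hlt hm)

end GradedModule

theorem graded_nakayama_general {R : Type*} [CommRing R]
    (𝒜 : ℕ → AddSubgroup R) [GradedRing 𝒜] [IsLocalRing ↥(𝒜 0)]
    {M N : Type*} [AddCommGroup M] [Module R M] [AddCommGroup N] [Module R N]
    (ℳ : ℕ → AddSubgroup M) [DirectSum.Decomposition ℳ]
    (𝒩 : ℕ → AddSubgroup N) [DirectSum.Decomposition 𝒩]
    (h𝒩 : ∀ (i j : ℕ) (r : R) (n : N), r ∈ 𝒜 i → n ∈ 𝒩 j → r • n ∈ 𝒩 (i + j))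
    (hNfg : ∀ d : ℕ, ∃ s : Finset N, (↑s : Set N) ⊆ 𝒩 d ∧
      ∀ n ∈ 𝒩 d, ∃ c : N → R, (∀ x, c x ∈ 𝒜 0) ∧ n = ∑ x ∈ s, c x • x)
    (f : M →ₗ[R] N) (hf : ∀ (d : ℕ), ∀ m ∈ ℳ d, f m ∈ 𝒩 d)
    -- the ideal 𝔪
    (𝔪 : Ideal R)
    (h𝔪 : 𝔪 = Ideal.span
      ((Subtype.val '' ((IsLocalRing.maximalIdeal ↥(𝒜 0) : Ideal ↥(𝒜 0)) : Set ↥(𝒜 0))) ∪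
        {x : R | ∃ i : ℕ, 0 < i ∧ x ∈ 𝒜 i}))
    -- surjectivity of the induced map `M/𝔪M → N/𝔪N`
    (hsurj : ∀ n : N, ∃ m : M, n - f m ∈ (𝔪 • (⊤ : Submodule R N))) :
    Function.Surjective f := by
  let : Module (𝒜 0) N := Module.compHom N (algebraMap (𝒜 0) R)
  have : IsScalarTower (𝒜 0) R N := .of_algebraMap_smul fun _ _ => rfl
  have : SetLike.GradedSMul 𝒜 𝒩 := ⟨fun {i j} _ _ => h𝒩 i j _ _⟩
  subst h𝔪
  have hgrade : ∀ d, ∀ n ∈ 𝒩 d, n ∈ LinearMap.range f := fun d => by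
    induction d using Nat.strong_induction_on with
    | _ d IH =>
      exact mem_range_of_mem_grade 𝒜 𝒩 ℳ f hf (IsLocalRing.maximalIdeal_le_jacobson ⊥) hsurj
        (gradeSubmodule_fg 𝒜 𝒩 (hNfg d)) IH
  exact LinearMap.range_eq_top.1 <| eq_top_iff.2 fun n _ =>
    Decomposition.inductionOn 𝒩 (zero_mem _) (fun n => hgrade _ _ n.2) (fun _ _ => add_mem) n

/-- Graded Nakayama lemma: let `R` be a nonnegatively graded commutative ring whose degree
zero part `𝒜 0` is a local ring, let `𝔪` be the ideal of `R` generated by the maximal ideal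
of `𝒜 0` together with all homogeneous elements of positive degree, and let `f : M → N` be a
morphism of nonnegatively graded `R`-modules whose graded pieces are finitely generated over
`𝒜 0`.  If the induced map `M/𝔪M → N/𝔪N` is surjective, then `f` is surjective. -/
theorem graded_nakayama {R : Type*} [CommRing R]
    (𝒜 : ℕ → AddSubgroup R) [GradedRing 𝒜] [IsLocalRing ↥(𝒜 0)]
    {M N : Type*} [AddCommGroup M] [Module R M] [AddCommGroup N] [Module R N]
    (ℳ : ℕ → AddSubgroup M) [DirectSum.Decomposition ℳ]
    (𝒩 : ℕ → AddSubgroup N) [DirectSum.Decomposition 𝒩]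
    (hℳ : ∀ (i j : ℕ) (r : R) (m : M), r ∈ 𝒜 i → m ∈ ℳ j → r • m ∈ ℳ (i + j))
    (h𝒩 : ∀ (i j : ℕ) (r : R) (n : N), r ∈ 𝒜 i → n ∈ 𝒩 j → r • n ∈ 𝒩 (i + j))
    (hMfg : ∀ d : ℕ, ∃ s : Finset M, (↑s : Set M) ⊆ ℳ d ∧
      ∀ m ∈ ℳ d, ∃ c : M → R, (∀ x, c x ∈ 𝒜 0) ∧ m = ∑ x ∈ s, c x • x)
    (hNfg : ∀ d : ℕ, ∃ s : Finset N, (↑s : Set N) ⊆ 𝒩 d ∧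
      ∀ n ∈ 𝒩 d, ∃ c : N → R, (∀ x, c x ∈ 𝒜 0) ∧ n = ∑ x ∈ s, c x • x)
    (f : M →ₗ[R] N) (hf : ∀ (d : ℕ), ∀ m ∈ ℳ d, f m ∈ 𝒩 d)
    -- the ideal 𝔪
    (𝔪 : Ideal R)
    (h𝔪 : 𝔪 = Ideal.span
      ((Subtype.val '' ((IsLocalRing.maximalIdeal ↥(𝒜 0) : Ideal ↥(𝒜 0)) : Set ↥(𝒜 0))) ∪
        {x : R | ∃ i : ℕ, 0 < i ∧ x ∈ 𝒜 i}))
    -- surjectivity of the induced map `M/𝔪M → N/𝔪N`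
    (hsurj : ∀ n : N, ∃ m : M, n - f m ∈ (𝔪 • (⊤ : Submodule R N))) :
    Function.Surjective f :=
  graded_nakayama_general 𝒜 ℳ 𝒩 h𝒩 hNfg f hf 𝔪 h𝔪 hsurj
end

section
/- The ring ℤ[1/7][z₁,z₂,z₃]/(z₁z₂+z₂z₃+z₃z₁) is an integral domain and is integrally closed in its field of fractions, i.e., it is a normal domain. -/
open MvPolynomial

/-- The ring `ℤ[1/7]`, i.e. the localization of `ℤ` inverting `7`. -/
def ZZ7 : Type := Localization.Away (7 : ℤ)

noncomputable instance : CommRing ZZ7 :=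
  inferInstanceAs (CommRing (Localization.Away (7 : ℤ)))

/-- The ring `ℤ[1/7][z₁,z₂,z₃]/(z₁z₂+z₂z₃+z₃z₁)`. -/
noncomputable abbrev MF17 : Type :=
  MvPolynomial (Fin 3) ZZ7 ⧸
    (Ideal.span {(X 0 * X 1 + X 1 * X 2 + X 2 * X 0 : MvPolynomial (Fin 3) ZZ7)})

/-!
The substitution `z₀ = uv`, `z₁ = u² - uv`, `z₂ = v² - uv` kills `z₀z₁ + z₁z₂ + z₂z₀` and identifies
the quotient ring with the subring `R[u², uv, v²]` of `R[u, v]`: after the shear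
`z₁ ↦ z₁ - z₀`, `z₂ ↦ z₂ - z₀` the relation becomes `z₁z₂ = z₀²`, which generates the kernel of
`(z₀, z₁, z₂) ↦ (uv, u², v²)` (reduce modulo the monic `z₀² - z₁z₂` in `z₀`, then compare
parities of exponents). So the quotient is a domain, and when `2` is a non-zero-divisor it is the
fixed ring of `(u, v) ↦ (-u, -v)`. A fixed ring `A = Sᵍ` of an integrally closed domain `S` is
integrally closed: an element of `Frac A` integral over `A` lies in `S`, and writing it as `a / b`
with `a, b ∈ A` shows that it is fixed by `g`.
-/
open scoped nonZeroDivisors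

theorem IsIntegrallyClosed.of_injective_of_fixedPoints {A S : Type*} [CommRing A] [CommRing S]
    [IsDomain S] [IsIntegrallyClosed S] (f : A →+* S) (hf : Function.Injective f)
    (σ : S →+* S) (hσ : ∀ a, σ (f a) = f a) (hfix : ∀ s, σ s = s → s ∈ f.range) :
    IsIntegrallyClosed A := by
  have := hf.isDomain f
  let K := FractionRing A
  let L := FractionRing S
  let g : K →+* L :=
    IsFractionRing.lift (g := (algebraMap S L).comp f) ((IsFractionRing.injective S L).comp hf)
  have hg (a : A) : g (algebraMap A K a) = algebraMap S L (f a) :=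
    IsFractionRing.lift_algebraMap _ a
  refine (isIntegrallyClosed_iff K).mpr fun {x} hx => ?_
  obtain ⟨s, hs⟩ : ∃ s, algebraMap S L s = g x :=
    IsIntegrallyClosed.isIntegral_iff.mp <|
      hx.map_of_comp_eq f g (RingHom.ext fun a => (hg a).symm)
  obtain ⟨a, b, hb, rfl⟩ := IsFractionRing.div_surjective (A := A) x
  have hfb : f b ≠ 0 := (map_ne_zero_iff f hf).mpr (nonZeroDivisors.ne_zero hb)
  have hsb : s * f b = f a := by
    apply IsFractionRing.injective S L
    rw [map_mul, hs, map_div₀, hg, hg, div_mul_cancel₀]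
    exact (map_ne_zero_iff _ (IsFractionRing.injective S L)).mpr hfb
  obtain ⟨c, rfl⟩ : s ∈ f.range := by
    refine hfix s (mul_right_cancel₀ hfb ?_)
    rw [← hσ b, ← map_mul, hsb, hσ, hσ, hsb]
  exact ⟨c, g.injective (by rw [hg, hs])⟩

namespace MvPolynomial

variable {σ R : Type*} [CommRing R]

section Negation

variable (σ R) in
noncomputable def negVars : MvPolynomial σ R →ₐ[R] MvPolynomial σ R :=
  aeval fun i => -X i

theorem negVars_monomial (m : σ →₀ ℕ) (c : R) :
    negVars σ R (monomial m c) = (-1) ^ m.degree * monomial m c := by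
  rw [negVars, aeval_monomial, monomial_eq]
  simp_rw [neg_pow (X _ : MvPolynomial σ R)]
  rw [Finsupp.prod_mul, Finsupp.degree_apply, Finsupp.prod, Finset.prod_pow_eq_pow_sum,
    algebraMap_eq]
  ring

theorem coeff_negVars (p : MvPolynomial σ R) (d : σ →₀ ℕ) :
    coeff d (negVars σ R p) = (-1) ^ d.degree * coeff d p := by
  classical
  induction p using MvPolynomial.induction_on' with
  | monomial m c =>
    rw [negVars_monomial, ← map_one C, ← map_neg, ← map_pow, coeff_C_mul, coeff_monomial]
    split_ifs with h <;> simp [h]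
  | add p q hp hq => simp only [map_add, coeff_add, hp, hq, mul_add]

theorem even_degree_of_negVars_eq {p : MvPolynomial σ R} (h2 : (2 : R) ∈ R⁰)
    (hp : negVars σ R p = p) {d : σ →₀ ℕ} (hd : d ∈ p.support) : Even d.degree := by
  by_contra hodd
  have h := coeff_negVars p d
  rw [hp, (Nat.not_even_iff_odd.mp hodd).neg_one_pow] at h
  exact mem_support_iff.mp hd <| mem_nonZeroDivisors_iff_right.mp h2 _ (by linear_combination h)

end Negation

section Veronese

variable (R) in
noncomputable def veronese : MvPolynomial (Fin 3) R →ₐ[R] MvPolynomial (Fin 2) R :=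
  aeval ![X 0 * X 1, X 0 ^ 2, X 1 ^ 2]

theorem veronese_eq_eval₂_finSuccEquiv (p : MvPolynomial (Fin 3) R) :
    veronese R p = (finSuccEquiv R 2 p).eval₂
      (expand 2 : MvPolynomial (Fin 2) R →ₐ[R] _).toRingHom (X 0 * X 1) := by
  let ev := Polynomial.eval₂AlgHom (expand 2) (X 0 * X 1 : MvPolynomial (Fin 2) R)
    fun _ => Commute.all _ _
  suffices veronese R = ev.comp (finSuccEquiv R 2).toAlgHom from congr($this p)
  refine algHom_ext (Fin.cases ?_ fun j => ?_)
  · simp [veronese, ev, finSuccEquiv_X_zero]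
  · rw [AlgHom.comp_apply, AlgEquiv.coe_toAlgHom, finSuccEquiv_X_succ]
    fin_cases j <;> simp [veronese, ev]

theorem coeff_two_smul_expand_mul_X_mul_X (p : MvPolynomial (Fin 2) R) (d : Fin 2 →₀ ℕ) :
    coeff (2 • d) (expand 2 p * (X 0 * X 1)) = 0 := by
  classical
  induction p using induction_on' with
  | monomial m c =>
    rw [expand_monomial, X, X, monomial_mul, monomial_mul, coeff_monomial, if_neg]
    intro h
    have := congr($h 0)
    simp at this
    omega
  | add p q hp hq => simp only [map_add, add_mul, coeff_add, hp, hq, add_zero]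

theorem eq_zero_of_expand_add_expand_mul_X_mul_X_eq_zero {a b : MvPolynomial (Fin 2) R}
    (h : expand 2 a + expand 2 b * (X 0 * X 1) = 0) : a = 0 ∧ b = 0 := by
  have ha : a = 0 := by
    ext d
    have := congr(coeff (2 • d) $h)
    rwa [coeff_add, coeff_expand_smul 2 two_ne_zero, coeff_two_smul_expand_mul_X_mul_X, add_zero]
      at this
  subst ha
  refine ⟨rfl, ?_⟩
  have hX : (X 0 * X 1 : MvPolynomial (Fin 2) R) =
      monomial (Finsupp.single 0 1 + Finsupp.single 1 1) 1 := by
    rw [X, X, monomial_mul, one_mul]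
  ext d
  have := congr(coeff (2 • d + (Finsupp.single 0 1 + Finsupp.single 1 1)) $h)
  rwa [map_zero, zero_add, hX, coeff_mul_monomial, mul_one, coeff_expand_smul 2 two_ne_zero,
    coeff_zero] at this

theorem dvd_finSuccEquiv_of_veronese_eq_zero {p : MvPolynomial (Fin 3) R}
    (hp : veronese R p = 0) :
    Polynomial.X ^ 2 - Polynomial.C (X 0 * X 1) ∣ finSuccEquiv R 2 p := by
  nontriviality R
  set g : Polynomial (MvPolynomial (Fin 2) R) := Polynomial.X ^ 2 - Polynomial.C (X 0 * X 1)
  let ev := (expand 2 : MvPolynomial (Fin 2) R →ₐ[R] _).toRingHom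
  have hg : g.Monic := Polynomial.monic_X_pow_sub_C _ two_ne_zero
  have hg2 : g.natDegree = 2 := Polynomial.natDegree_X_pow_sub_C
  set r := finSuccEquiv R 2 p %ₘ g with hr_def
  have hr : r = Polynomial.C (r.coeff 1) * Polynomial.X + Polynomial.C (r.coeff 0) := by
    refine Polynomial.eq_X_add_C_of_natDegree_le_one ?_
    have : r.natDegree < g.natDegree :=
      Polynomial.natDegree_modByMonic_lt _ hg (fun h => by simp [h] at hg2)
    omega
  have hev : r.eval₂ ev (X 0 * X 1) = 0 := by
    have hgev : g.eval₂ ev (X 0 * X 1) = 0 := by simp [g, ev]; ring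
    rw [hr_def, Polynomial.modByMonic_eq_sub_mul_div, Polynomial.eval₂_sub,
      Polynomial.eval₂_mul, hgev, zero_mul, sub_zero, ← veronese_eq_eval₂_finSuccEquiv, hp]
  obtain ⟨hr0, hr1⟩ : r.coeff 0 = 0 ∧ r.coeff 1 = 0 := by
    refine eq_zero_of_expand_add_expand_mul_X_mul_X_eq_zero ?_
    rw [hr, Polynomial.eval₂_add, Polynomial.eval₂_mul, Polynomial.eval₂_C, Polynomial.eval₂_C,
      Polynomial.eval₂_X] at hev
    rw [← hev]
    simp only [ev, AlgHom.toRingHom_eq_coe, RingHom.coe_coe]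
    ring
  rw [← Polynomial.modByMonic_eq_zero_iff_dvd hg, ← hr_def, hr, hr0, hr1]
  simp

theorem ker_veronese : RingHom.ker (veronese R) = Ideal.span {X 1 * X 2 - X 0 ^ 2} := by
  refine le_antisymm (fun p hp => ?_) ?_
  · let e : MvPolynomial (Fin 3) R ≃ₐ[R] Polynomial (MvPolynomial (Fin 2) R) :=
      finSuccEquiv R 2
    obtain ⟨c, hc⟩ := dvd_finSuccEquiv_of_veronese_eq_zero hp
    have he : e (X 1 * X 2 - X 0 ^ 2) = -(Polynomial.X ^ 2 - Polynomial.C (X 0 * X 1)) := by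
      change e (X (Fin.succ 0) * X (Fin.succ 1) - X 0 ^ 2) = _
      rw [map_sub, map_mul, map_pow, finSuccEquiv_X_succ, finSuccEquiv_X_succ,
        finSuccEquiv_X_zero, ← Polynomial.C_mul]
      ring
    refine Ideal.mem_span_singleton.mpr ⟨-e.symm c, e.injective ?_⟩
    rw [map_mul, map_neg, he, e.apply_symm_apply]
    exact hc.trans (by ring)
  · rw [Ideal.span_le, Set.singleton_subset_iff]
    simp [veronese]
    ring

theorem negVars_veronese (p : MvPolynomial (Fin 3) R) :
    negVars (Fin 2) R (veronese R p) = veronese R p := by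
  rw [← AlgHom.comp_apply]
  congr 1
  ext i
  fin_cases i <;> simp [negVars, veronese]

theorem monomial_mem_range_veronese {m : Fin 2 →₀ ℕ} (hm : Even m.degree) (c : R) :
    monomial m c ∈ (veronese R).range := by
  obtain ⟨r, k, l, h0, h1⟩ : ∃ r k l, m 0 = 2 * k + r ∧ m 1 = 2 * l + r := by
    rw [Finsupp.degree_eq_sum, Fin.sum_univ_two, Nat.even_iff] at hm
    exact ⟨m 0 % 2, m 0 / 2, m 1 / 2, by omega, by omega⟩
  refine ⟨C c * X 0 ^ r * X 1 ^ k * X 2 ^ l, ?_⟩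
  rw [monomial_eq, Finsupp.prod_fintype _ _ (by simp), Fin.prod_univ_two, h0, h1]
  simp [veronese]
  ring

theorem mem_range_veronese_of_negVars_eq {p : MvPolynomial (Fin 2) R} (h2 : (2 : R) ∈ R⁰)
    (hp : negVars (Fin 2) R p = p) : p ∈ (veronese R).range := by
  rw [← support_sum_monomial_coeff p]
  exact Subalgebra.sum_mem _ fun d hd =>
    monomial_mem_range_veronese (even_degree_of_negVars_eq h2 hp hd) _

end Veronese

section Quotient

variable (R) in
noncomputable def shear : MvPolynomial (Fin 3) R ≃ₐ[R] MvPolynomial (Fin 3) R :=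
  AlgEquiv.ofAlgHom (aeval ![X 0, X 1 - X 0, X 2 - X 0]) (aeval ![X 0, X 1 + X 0, X 2 + X 0])
    (algHom_ext fun i => by fin_cases i <;> simp)
    (algHom_ext fun i => by fin_cases i <;> simp)

theorem ker_veronese_comp_shear :
    RingHom.ker ((veronese R).comp (shear R).toAlgHom) =
      Ideal.span {X 0 * X 1 + X 1 * X 2 + X 2 * X 0} := by
  ext p
  rw [RingHom.mem_ker, AlgHom.comp_apply, ← RingHom.mem_ker, ker_veronese,
    Ideal.mem_span_singleton, Ideal.mem_span_singleton, ← map_dvd_iff (shear R).symm,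
    AlgEquiv.coe_toAlgHom, AlgEquiv.symm_apply_apply]
  convert Iff.rfl using 2
  simp [shear]
  ring

variable (R) in
noncomputable def quotientEsymmTwoToVeronese :
    MvPolynomial (Fin 3) R ⧸
        Ideal.span {(X 0 * X 1 + X 1 * X 2 + X 2 * X 0 : MvPolynomial (Fin 3) R)} →+*
      MvPolynomial (Fin 2) R :=
  Ideal.Quotient.lift _ ((veronese R).comp (shear R).toAlgHom).toRingHom
    fun _ h => by rwa [← ker_veronese_comp_shear] at h

theorem quotientEsymmTwoToVeronese_injective :
    Function.Injective (quotientEsymmTwoToVeronese R) :=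
  (Ideal.injective_lift_iff _).mpr ker_veronese_comp_shear

theorem isDomain_quotient_esymmTwo [IsDomain R] :
    IsDomain (MvPolynomial (Fin 3) R ⧸
      Ideal.span {(X 0 * X 1 + X 1 * X 2 + X 2 * X 0 : MvPolynomial (Fin 3) R)}) :=
  quotientEsymmTwoToVeronese_injective.isDomain _

theorem isIntegrallyClosed_quotient_esymmTwo [IsDomain R] [UniqueFactorizationMonoid R]
    (h2 : (2 : R) ≠ 0) :
    IsIntegrallyClosed (MvPolynomial (Fin 3) R ⧸
      Ideal.span {(X 0 * X 1 + X 1 * X 2 + X 2 * X 0 : MvPolynomial (Fin 3) R)}) := by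
  refine .of_injective_of_fixedPoints _ quotientEsymmTwoToVeronese_injective (negVars (Fin 2) R)
    (fun a => ?_) (fun s hs => ?_)
  · obtain ⟨p, rfl⟩ := Ideal.Quotient.mk_surjective a
    exact negVars_veronese _
  · obtain ⟨p, rfl⟩ := mem_range_veronese_of_negVars_eq (mem_nonZeroDivisors_of_ne_zero h2) hs
    exact ⟨Ideal.Quotient.mk _ ((shear R).symm p), by simp [quotientEsymmTwoToVeronese]⟩

end Quotient

end MvPolynomial

theorem powers_seven_le_nonZeroDivisors : Submonoid.powers (7 : ℤ) ≤ ℤ⁰ :=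
  powers_le_nonZeroDivisors_of_noZeroDivisors (by norm_num)

instance : IsDomain ZZ7 := IsLocalization.isDomain_localization powers_seven_le_nonZeroDivisors

instance : UniqueFactorizationMonoid ZZ7 :=
  inferInstanceAs (UniqueFactorizationMonoid (Localization.Away (7 : ℤ)))

instance : CharZero ZZ7 :=
  have : CharZero (Localization.Away (7 : ℤ)) := charZero_of_injective_algebraMap
    (IsLocalization.injective (Localization.Away (7 : ℤ)) powers_seven_le_nonZeroDivisors)
  this

/-- `ℤ[1/7][z₁,z₂,z₃]/(z₁z₂+z₂z₃+z₃z₁)` is a normal domain: it is an integral domain that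
is integrally closed in its field of fractions. -/
theorem MF17_isDomain_and_integrallyClosed :
    IsDomain MF17 ∧ IsIntegrallyClosed MF17 :=
  ⟨isDomain_quotient_esymmTwo, isIntegrallyClosed_quotient_esymmTwo two_ne_zero⟩
end

section
/- Let Ã, R, λ, σ₁ be as given. The assignment z₁ ↦ −z₃, z₂ ↦ −z₁, z₃ ↦ −z₂, r ↦ r + z₂z₃ determines a well-defined ℤ_(3)-algebra automorphism τ of R; τ has order 6 and fixes λ(ā₂), λ(ā₄) and λ(ā₆), so τ is an automorphism of R as an Ã-algebra. Moreover, the elements n₄ = σ₁²r − z₁³z₃ − z₁z₂³ − z₁²z₃² and n₆ = σ₁²r² − 2z₁³z₃r − 2z₁z₂³r − 2z₁²z₃²r + 2z₁³z₃³ − z₁²z₃⁴ of R are fixed by τ. -/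
open MvPolynomial

instance : (Ideal.span {(3 : ℤ)}).IsPrime :=
  (Ideal.span_singleton_prime (by norm_num)).mpr Int.prime_three

/-- The ring `ℤ_(3)`, the localization of `ℤ` at the prime ideal `(3)`. -/
def Z3loc : Type := Localization.AtPrime (Ideal.span {(3 : ℤ)})

noncomputable instance : CommRing Z3loc :=
  inferInstanceAs (CommRing (Localization.AtPrime (Ideal.span {(3 : ℤ)})))

/-- The polynomial ring `Ã = ℤ_(3)[ā₂,ā₄,ā₆]`. -/
noncomputable abbrev Atilde : Type := MvPolynomial (Fin 3) Z3loc

/-- The ring `R = ℤ_(3)[z₁,z₂,z₃,r]/(z₁z₂+z₂z₃+z₃z₁)`; the variables `X 0, X 1, X 2, X 3`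
are `z₁, z₂, z₃, r` respectively. -/
noncomputable abbrev Rring : Type :=
  MvPolynomial (Fin 4) Z3loc ⧸
    (Ideal.span {(X 0 * X 1 + X 1 * X 2 + X 2 * X 0 : MvPolynomial (Fin 4) Z3loc)})

/-- The images of the variables `z₁, z₂, z₃, r` in `R`. -/
noncomputable def zR (i : Fin 4) : Rring := Ideal.Quotient.mk _ (X i)

/-- `σ₁ = z₁+z₂+z₃` in `R`. -/
noncomputable def σ₁R : Rring := zR 0 + zR 1 + zR 2

/-- `σ₃ = z₁z₂z₃` in `R`. -/
noncomputable def σ₃R : Rring := zR 0 * zR 1 * zR 2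

/-- `λ(ā₂) = (1/4)(z₁−z₂+z₃)² − z₂z₃ − 3r`  (note `4` is a unit in `ℤ_(3)`). -/
noncomputable def la2 : Rring :=
  Ring.inverse (4 : Rring) * (zR 0 - zR 1 + zR 2) ^ 2 - zR 1 * zR 2 - 3 * zR 3

/-- `λ(ā₄) = (1/2)z₁z₃²(z₁−z₂+z₃) − 2r·λ(ā₂) − 3r²`. -/
noncomputable def la4 : Rring :=
  Ring.inverse (2 : Rring) * (zR 0 * zR 2 ^ 2 * (zR 0 - zR 1 + zR 2))
    - 2 * zR 3 * la2 - 3 * zR 3 ^ 2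

/-- `λ(ā₆) = (1/4)z₁²z₃⁴ − r·λ(ā₄) − r²·λ(ā₂) − r³`. -/
noncomputable def la6 : Rring :=
  Ring.inverse (4 : Rring) * (zR 0 ^ 2 * zR 2 ^ 4)
    - zR 3 * la4 - zR 3 ^ 2 * la2 - zR 3 ^ 3

/-- The `ℤ_(3)`-algebra map `λ : Ã → R`, `ā₂ ↦ λ(ā₂)`, `ā₄ ↦ λ(ā₄)`, `ā₆ ↦ λ(ā₆)`. -/
noncomputable def lam : Atilde →ₐ[Z3loc] Rring :=
  MvPolynomial.aeval ![la2, la4, la6]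

/-- `n₄ = σ₁²r − z₁³z₃ − z₁z₂³ − z₁²z₃²`. -/
noncomputable def n4R : Rring :=
  σ₁R ^ 2 * zR 3 - zR 0 ^ 3 * zR 2 - zR 0 * zR 1 ^ 3 - zR 0 ^ 2 * zR 2 ^ 2

/-- `n₆ = σ₁²r² − 2z₁³z₃r − 2z₁z₂³r − 2z₁²z₃²r + 2z₁³z₃³ − z₁²z₃⁴`. -/
noncomputable def n6R : Rring :=
  σ₁R ^ 2 * zR 3 ^ 2 - 2 * zR 0 ^ 3 * zR 2 * zR 3 - 2 * zR 0 * zR 1 ^ 3 * zR 3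
    - 2 * zR 0 ^ 2 * zR 2 ^ 2 * zR 3 + 2 * zR 0 ^ 3 * zR 2 ^ 3 - zR 0 ^ 2 * zR 2 ^ 4

/-!
The defining relation `z₁z₂ + z₂z₃ + z₃z₁` is invariant under the substitution, so `τ` is a
well-defined endomorphism of `R`; it permutes `z₁, z₂, z₃` cyclically up to sign, and `τ⁶ = 1`
makes it an automorphism. Evaluating `τ²z₁ = z₂` and `τ³z₁ = −z₁` at `z = (1, 0, 0)`, `r = 0`
shows `τ² ≠ 1` and `τ³ ≠ 1` (`2` is a unit in `ℤ_(3)`).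

The elements `λ(ā₂), λ(ā₄), λ(ā₆)` are the coefficients of the Weierstrass curve obtained from
`E : y² = x³ + A₂x² + A₄x + A₆`, with `A₂ = ¼(z₁−z₂+z₃)² − z₂z₃`, `A₄ = ½z₁z₃²(z₁−z₂+z₃)` and
`A₆ = ¼z₁²z₃⁴`, by the translation `x ↦ x − r`. Applying `τ` to the coefficients of `E` translates
`E` by `z₂z₃`, and `r ↦ r + z₂z₃` undoes exactly this translation.
-/

namespace Z3loc

instance : Nontrivial Z3loc :=
  inferInstanceAs (Nontrivial (Localization.AtPrime (Ideal.span {(3 : ℤ)})))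

theorem isUnit_intCast {n : ℤ} (hn : ¬ (3 : ℤ) ∣ n) : IsUnit (n : Z3loc) := by
  have := IsLocalization.map_units (Localization.AtPrime (Ideal.span {(3 : ℤ)}))
    (⟨n, by simpa [Ideal.mem_span_singleton] using hn⟩ : (Ideal.span {(3 : ℤ)}).primeCompl)
  rwa [eq_intCast] at this

theorem neg_one_ne_one : (-1 : Z3loc) ≠ 1 := fun h => by
  have h2 : ((2 : ℤ) : Z3loc) = 0 := by push_cast; linear_combination -h
  exact (isUnit_intCast (by norm_num)).ne_zero h2

end Z3loc

namespace Rring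

theorem zR_relation : zR 0 * zR 1 + zR 1 * zR 2 + zR 2 * zR 0 = 0 :=
  Ideal.Quotient.eq_zero_iff_mem.mpr (Ideal.subset_span rfl)

noncomputable def lift {B : Type*} [CommRing B] [Algebra Z3loc B] (v : Fin 4 → B)
    (hv : v 0 * v 1 + v 1 * v 2 + v 2 * v 0 = 0) : Rring →ₐ[Z3loc] B :=
  Ideal.Quotient.liftₐ _ (aeval v) fun a ha => by
    obtain ⟨c, rfl⟩ := Ideal.mem_span_singleton'.mp ha
    simp [hv]

@[simp]
theorem lift_zR {B : Type*} [CommRing B] [Algebra Z3loc B] (v : Fin 4 → B)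
    (hv : v 0 * v 1 + v 1 * v 2 + v 2 * v 0 = 0) (i : Fin 4) : lift v hv (zR i) = v i :=
  aeval_X v i

theorem algHom_ext {B : Type*} [Semiring B] [Algebra Z3loc B] {f g : Rring →ₐ[Z3loc] B}
    (h : ∀ i, f (zR i) = g (zR i)) : f = g :=
  Ideal.Quotient.algHom_ext _ (MvPolynomial.algHom_ext h)

theorem isUnit_intCast {n : ℤ} (hn : ¬ (3 : ℤ) ∣ n) : IsUnit (n : Rring) := by
  simpa only [map_intCast] using (Z3loc.isUnit_intCast hn).map (algebraMap Z3loc Rring)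

theorem isUnit_two : IsUnit (2 : Rring) := by
  exact_mod_cast isUnit_intCast (n := 2) (by norm_num)

theorem isUnit_four : IsUnit (4 : Rring) := by
  exact_mod_cast isUnit_intCast (n := 4) (by norm_num)

end Rring

theorem map_ringInverse {M N F : Type*} [MonoidWithZero M] [MonoidWithZero N] [FunLike F M N]
    [MonoidHomClass F M N] (f : F) {a : M} (ha : IsUnit a) :
    f (Ring.inverse a) = Ring.inverse (f a) := by
  obtain ⟨u, rfl⟩ := ha
  rw [Ring.inverse_unit]
  exact (Ring.inverse_unit (Units.map (f : M →* N) u)).symm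

noncomputable def tauHom : Rring →ₐ[Z3loc] Rring :=
  Rring.lift ![-zR 2, -zR 0, -zR 1, zR 3 + zR 1 * zR 2] <| by
    simp only [Matrix.cons_val]
    linear_combination Rring.zR_relation

@[simp] theorem tauHom_zR_zero : tauHom (zR 0) = -zR 2 := Rring.lift_zR _ _ 0
@[simp] theorem tauHom_zR_one : tauHom (zR 1) = -zR 0 := Rring.lift_zR _ _ 1
@[simp] theorem tauHom_zR_two : tauHom (zR 2) = -zR 1 := Rring.lift_zR _ _ 2
@[simp] theorem tauHom_zR_three : tauHom (zR 3) = zR 3 + zR 1 * zR 2 := Rring.lift_zR _ _ 3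

theorem tauHom_pow_six : tauHom ^ 6 = 1 := by
  refine Rring.algHom_ext fun i => ?_
  fin_cases i <;> simp [pow_succ, AlgHom.mul_apply]
  linear_combination 2 * Rring.zR_relation

theorem tauHom_sq_zR_zero : (tauHom ^ 2) (zR 0) = zR 1 := by
  simp [sq, AlgHom.mul_apply]

theorem tauHom_pow_three_zR_zero : (tauHom ^ 3) (zR 0) = -zR 0 := by
  simp [pow_succ, AlgHom.mul_apply]

theorem orderOf_tauHom : orderOf tauHom = 6 := by
  refine orderOf_eq_of_pow_and_pow_div_prime (by norm_num) tauHom_pow_six fun p hp hp6 h => ?_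
  set ev : Rring →ₐ[Z3loc] Z3loc := Rring.lift ![1, 0, 0, 0] (by simp)
  have h0 : ev ((tauHom ^ (6 / p)) (zR 0)) = ev (zR 0) := by rw [h, AlgHom.one_apply]
  obtain rfl | rfl : p = 2 ∨ p = 3 := by
    rcases (Nat.Prime.dvd_mul hp).mp (show p ∣ 2 * 3 from hp6) with h2 | h3
    exacts [.inl ((Nat.prime_dvd_prime_iff_eq hp Nat.prime_two).mp h2),
      .inr ((Nat.prime_dvd_prime_iff_eq hp Nat.prime_three).mp h3)]
  · simp [tauHom_pow_three_zR_zero, ev] at h0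
    exact Z3loc.neg_one_ne_one h0
  · simp [tauHom_sq_zR_zero, ev] at h0

noncomputable def tauEquiv : Rring ≃ₐ[Z3loc] Rring :=
  AlgEquiv.ofAlgHom tauHom (tauHom ^ 5) ((pow_succ' tauHom 5).symm.trans tauHom_pow_six)
    ((pow_succ tauHom 5).symm.trans tauHom_pow_six)

theorem toAlgHom_eq_tauHom {τ : Rring ≃ₐ[Z3loc] Rring} (h0 : τ (zR 0) = -zR 2)
    (h1 : τ (zR 1) = -zR 0) (h2 : τ (zR 2) = -zR 1) (h3 : τ (zR 3) = zR 3 + zR 1 * zR 2) :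
    (τ : Rring →ₐ[Z3loc] Rring) = tauHom := by
  refine Rring.algHom_ext fun i => ?_
  fin_cases i <;> simpa

namespace WeierstrassCurve.VariableChange

variable {S : Type*} [CommRing S]

/-- The change of variables `x ↦ x + r`, `y ↦ y`. -/
def translation (r : S) : VariableChange S := ⟨1, r, 0, 0⟩

theorem translation_mul_translation (r r' : S) :
    translation r * translation r' = translation (r + r') := by
  ext <;> simp [translation, mul_def]

theorem map_translation {A : Type*} [CommRing A] (φ : S →+* A) (r : S) :
    (translation r).map φ = translation (φ r) := by
  ext <;> simp [translation]

end WeierstrassCurve.VariableChange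

open WeierstrassCurve WeierstrassCurve.VariableChange

noncomputable def baseCurve : WeierstrassCurve Rring where
  a₁ := 0
  a₂ := Ring.inverse (4 : Rring) * (zR 0 - zR 1 + zR 2) ^ 2 - zR 1 * zR 2
  a₃ := 0
  a₄ := Ring.inverse (2 : Rring) * (zR 0 * zR 2 ^ 2 * (zR 0 - zR 1 + zR 2))
  a₆ := Ring.inverse (4 : Rring) * (zR 0 ^ 2 * zR 2 ^ 4)

noncomputable def lamCurve : WeierstrassCurve Rring := ⟨0, la2, 0, la4, la6⟩

theorem lamCurve_eq : lamCurve = translation (-zR 3) • baseCurve := by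
  ext <;> simp [lamCurve, baseCurve, translation, variableChange_def, la2, la4, la6] <;> ring

theorem baseCurve_map_tauHom :
    baseCurve.map (tauHom : Rring →+* Rring) = translation (zR 1 * zR 2) • baseCurve := by
  have h2 := Ring.mul_inverse_cancel _ Rring.isUnit_two
  have h4 := Ring.mul_inverse_cancel _ Rring.isUnit_four
  have t2 : tauHom (Ring.inverse (2 : Rring)) = Ring.inverse 2 := by
    rw [map_ringInverse _ Rring.isUnit_two, map_ofNat]
  have t4 : tauHom (Ring.inverse (4 : Rring)) = Ring.inverse 4 := by
    rw [map_ringInverse _ Rring.isUnit_four, map_ofNat]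
  set G₄ := -zR 2 * zR 1 ^ 2 * (zR 0 - zR 1 - zR 2) - zR 0 * zR 2 ^ 2 * (zR 0 - zR 1 + zR 2)
  set G₆ := zR 0 * zR 1 * zR 2 ^ 3 * (zR 0 - zR 1 + zR 2)
  -- With `c₂ = ½`, `c₄ = ¼`, write each difference as `c₄P + c₂G + G₀`; then
  -- `P + 2G + 4G₀ = Q · rel` in `ℤ[z]`, and the difference equals
  -- `c₄Q · rel + (G₀ + c₂G)(1 - 4c₄) + 2c₄G(2c₂ - 1)`.
  ext <;> simp [baseCurve, translation, variableChange_def, t2, t4]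
  · linear_combination (-4 * Ring.inverse (4 : Rring)) * Rring.zR_relation
      + (zR 0 * zR 1 + 2 * zR 1 * zR 2) * h4
  · linear_combination
      (-2 * Ring.inverse (4 : Rring) * zR 2 * (zR 0 - zR 1 + zR 2)) * Rring.zR_relation
      + (zR 1 ^ 2 * zR 2 ^ 2 - Ring.inverse (2 : Rring) * G₄) * h4
      + (2 * Ring.inverse (4 : Rring) * G₄) * h2
  · linear_combination
      (-Ring.inverse (4 : Rring) * zR 2 ^ 2 * (zR 0 * zR 1 + zR 0 * zR 2 - 2 * zR 1 ^ 2
        + zR 1 * zR 2)) * Rring.zR_relation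
      + (Ring.inverse (2 : Rring) * G₆) * h4
      - (2 * Ring.inverse (4 : Rring) * G₆) * h2

theorem lamCurve_map_tauHom : lamCurve.map (tauHom : Rring →+* Rring) = lamCurve :=
  calc lamCurve.map (tauHom : Rring →+* Rring)
      = translation (-(zR 3 + zR 1 * zR 2)) • translation (zR 1 * zR 2) • baseCurve := by
        rw [lamCurve_eq, ← map_variableChange, map_translation, baseCurve_map_tauHom]
        simp
    _ = lamCurve := by
        rw [smul_smul, translation_mul_translation, lamCurve_eq]
        congr 2
        ring

theorem tauHom_la2 : tauHom la2 = la2 := congrArg a₂ lamCurve_map_tauHom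
theorem tauHom_la4 : tauHom la4 = la4 := congrArg a₄ lamCurve_map_tauHom
theorem tauHom_la6 : tauHom la6 = la6 := congrArg a₆ lamCurve_map_tauHom

theorem tauHom_n4R : tauHom n4R = n4R := by
  simp only [n4R, σ₁R, map_sub, map_add, map_mul, map_pow, tauHom_zR_zero, tauHom_zR_one,
    tauHom_zR_two, tauHom_zR_three]
  linear_combination (zR 0 * zR 2 + zR 1 ^ 2 + zR 1 * zR 2) * Rring.zR_relation

theorem tauHom_n6R : tauHom n6R = n6R := by
  simp only [n6R, σ₁R, map_sub, map_add, map_mul, map_pow, map_ofNat, tauHom_zR_zero,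
    tauHom_zR_one, tauHom_zR_two, tauHom_zR_three]
  linear_combination (-2 * zR 0 ^ 2 * zR 2 ^ 2 + zR 0 * zR 1 * zR 2 ^ 2 + zR 0 * zR 2 ^ 3
    + 2 * zR 0 * zR 2 * zR 3 + 2 * zR 1 ^ 2 * zR 2 ^ 2 + 2 * zR 1 ^ 2 * zR 3
    - zR 1 * zR 2 ^ 3 + 2 * zR 1 * zR 2 * zR 3) * Rring.zR_relation

/-- The assignment `z₁ ↦ −z₃, z₂ ↦ −z₁, z₃ ↦ −z₂, r ↦ r + z₂z₃` determines a unique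
well-defined `ℤ_(3)`-algebra automorphism `τ` of `R`; any such `τ` has order `6`, fixes
`λ(ā₂)`, `λ(ā₄)`, `λ(ā₆)` (so it is an automorphism of `R` as an `Ã`-algebra), and fixes
the elements `n₄` and `n₆`. -/
theorem tau_exists_unique_and_properties :
    (∃! τ : Rring ≃ₐ[Z3loc] Rring,
      τ (zR 0) = -zR 2 ∧ τ (zR 1) = -zR 0 ∧ τ (zR 2) = -zR 1 ∧
        τ (zR 3) = zR 3 + zR 1 * zR 2) ∧
    (∀ τ : Rring ≃ₐ[Z3loc] Rring,
      τ (zR 0) = -zR 2 → τ (zR 1) = -zR 0 → τ (zR 2) = -zR 1 →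
        τ (zR 3) = zR 3 + zR 1 * zR 2 →
      orderOf τ = 6 ∧ τ la2 = la2 ∧ τ la4 = la4 ∧ τ la6 = la6 ∧
        τ n4R = n4R ∧ τ n6R = n6R) := by
  refine ⟨⟨tauEquiv, by simp [tauEquiv], fun τ ⟨h0, h1, h2, h3⟩ => ?_⟩,
    fun τ h0 h1 h2 h3 => ?_⟩
  · exact AlgEquiv.coe_toAlgHom_injective (toAlgHom_eq_tauHom h0 h1 h2 h3)
  · have hτ := toAlgHom_eq_tauHom h0 h1 h2 h3
    have hfix {x : Rring} (hx : tauHom x = x) : τ x = x := (AlgHom.congr_fun hτ x).trans hx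
    refine ⟨?_, hfix tauHom_la2, hfix tauHom_la4, hfix tauHom_la6, hfix tauHom_n4R,
      hfix tauHom_n6R⟩
    rw [← orderOf_injective (AlgEquiv.toAlgHomHom Z3loc Rring) AlgEquiv.coe_toAlgHom_injective τ]
    exact (congrArg orderOf hτ).trans orderOf_tauHom
end
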